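/- arXiv:2503.20818 — 3 statements merged into one kernel-verified Lean document; each statement's English description precedes it below -/
import Mathlib

section
/- Let G be a compact Lie group, H a closed subgroup of G, and g ∈ G. If gHg⁻¹ ≤ H, then gHg⁻¹ = H. -/
/-- **Subconjugation lemma.** Let `G` be a compact Lie group, `H` a closed subgroup
of `G`, and `g ∈ G`. If `gHg⁻¹ ≤ H`, then `gHg⁻¹ = H`. -/
theorem conj_eq_of_conj_le
    {𝔼 : Type*} [NormedAddCommGroup 𝔼] [NormedSpace ℝ 𝔼]
    {M : Type*} [TopologicalSpace M] (I : ModelWithCorners ℝ 𝔼 M)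
    {G : Type*} [Group G] [TopologicalSpace G] [ChartedSpace M G]
    [IsTopologicalGroup G] [CompactSpace G] [LieGroup I (⊤ : ℕ∞) G]
    (H : Subgroup G) (hH : IsClosed (H : Set G)) (g : G)
    (hle : Subgroup.map (MulAut.conj g).toMonoidHom H ≤ H) :
    Subgroup.map (MulAut.conj g).toMonoidHom H = H := by
  have hconj : ∀ a ∈ H, g * a * g⁻¹ ∈ H := fun a ha =>
    hle ⟨a, ha, rfl⟩
  refine le_antisymm hle fun h hh => ?_
  -- it suffices to show `g⁻¹ * h * g ∈ H`
  suffices hmem : g⁻¹ * h * g ∈ H by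
    exact ⟨g⁻¹ * h * g, hmem, by simp [MulAut.conj_apply]; group⟩
  -- each `g^n * h * g^(-n)` lies in `H`
  have hpow : ∀ n : ℕ, g ^ n * h * (g ^ n)⁻¹ ∈ H := by
    intro n
    induction n with
    | zero => simpa using hh
    | succ n ih =>
      have := hconj _ ih
      have heq : g * (g ^ n * h * (g ^ n)⁻¹) * g⁻¹
          = g ^ (n + 1) * h * (g ^ (n + 1))⁻¹ := by
        rw [pow_succ']
        group
      rwa [heq] at this
  -- `g⁻¹` is a cluster point of `g^n`
  have hc : MapClusterPt ((g : G) ^ (-1 : ℤ)) Filter.atTop (g ^ · : ℕ → G) :=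
    mapClusterPt_self_zpow_atTop_pow g (-1)
  have hcont : ContinuousAt (fun x : G => x * h * x⁻¹) (g ^ (-1 : ℤ)) := by
    fun_prop
  have hc2 : MapClusterPt ((fun x : G => x * h * x⁻¹) (g ^ (-1 : ℤ)))
      Filter.atTop ((fun x : G => x * h * x⁻¹) ∘ (g ^ · : ℕ → G)) :=
    hc.continuousAt_comp hcont
  have hval : (fun x : G => x * h * x⁻¹) (g ^ (-1 : ℤ)) = g⁻¹ * h * g := by
    simp [zpow_neg, zpow_one]
  rw [hval] at hc2
  have hclosure : g⁻¹ * h * g ∈ closure (H : Set G) := by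
    rw [mem_closure_iff_clusterPt]
    have hsub : Set.range ((fun x : G => x * h * x⁻¹) ∘ (g ^ · : ℕ → G)) ⊆ (H : Set G) := by
      rintro _ ⟨n, rfl⟩
      exact hpow n
    exact hc2.clusterPt.mono (le_trans
      (Filter.le_principal_iff.2 Filter.range_mem_map) (Filter.principal_mono.2 hsub))
  rwa [hH.closure_eq] at hclosure
end

section
/- Let G be a compact Lie group, let F' be a family of closed subgroups of G, and let H be a closed subgroup of G no conjugate of which lies in F'; suppose F = F' ∪ (H) is a family of closed subgroups of G. Let G act on a set X in such a way that the stabilizer of every point of X is a closed subgroup of G belonging to F. If x and y are H-fixed points of X (i.e., h·x = x and h·y = y for all h ∈ H) and g ∈ G satisfies g·x = y, then g lies in the normalizer N_G(H) of H in G. -/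
lemma one_mem_closure_pow {G : Type*} [Group G] [TopologicalSpace G] [IsTopologicalGroup G]
    [CompactSpace G] (g : G) : (1 : G) ∈ closure (Set.range fun n : ℕ => g ^ (n + 1)) := by
  obtain ⟨c, hc⟩ := exists_clusterPt_of_compactSpace
    (Filter.map (fun n : ℕ => g ^ (n + 1)) Filter.atTop)
  rw [mem_closure_iff_nhds]
  intro U hU
  have hcont : ContinuousAt (fun p : G × G => p.1⁻¹ * p.2) (c, c) := by fun_prop
  have h1 : (fun p : G × G => p.1⁻¹ * p.2) (c, c) = 1 := by simp
  have hU' : (fun p : G × G => p.1⁻¹ * p.2) ⁻¹' U ∈ nhds (c, c) := hcont (h1 ▸ hU)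
  rw [nhds_prod_eq, Filter.mem_prod_iff] at hU'
  obtain ⟨W1, hW1, W2, hW2, hW⟩ := hU'
  have hcc : MapClusterPt c Filter.atTop (fun n : ℕ => g ^ (n + 1)) := hc
  have hfreq : ∃ᶠ n in Filter.atTop, g ^ (n + 1) ∈ W1 ∩ W2 :=
    mapClusterPt_iff_frequently.mp hcc _ (Filter.inter_mem hW1 hW2)
  obtain ⟨m, -, hm⟩ := Filter.frequently_atTop.mp hfreq 0
  obtain ⟨n, hnm, hn⟩ := Filter.frequently_atTop.mp hfreq (m + 1)
  have he : (g ^ (m + 1))⁻¹ * g ^ (n + 1) = g ^ (n - m) := by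
    have h2 : g ^ (n + 1) = g ^ (m + 1) * g ^ (n - m) := by
      rw [← pow_add]; congr 1; omega
    rw [h2, inv_mul_cancel_left]
  refine ⟨g ^ (n - m), ?_, ⟨n - m - 1, ?_⟩⟩
  · have := hW (Set.mk_mem_prod hm.1 hn.2)
    rwa [Set.mem_preimage, he] at this
  · show g ^ (n - m - 1 + 1) = g ^ (n - m)
    congr 1; omega

lemma conj_inv_mem_of_conj_mem {G : Type*} [Group G] [TopologicalSpace G] [IsTopologicalGroup G]
    [CompactSpace G] {H : Subgroup G} (hH : IsClosed (H : Set G)) {g : G}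
    (hle : ∀ h ∈ H, g * h * g⁻¹ ∈ H) {h : G} (hh : h ∈ H) : g⁻¹ * h * g ∈ H := by
  have hpow : ∀ k : ℕ, g ^ k * h * (g ^ k)⁻¹ ∈ H := by
    intro k
    induction k with
    | zero => simpa using hh
    | succ k ih =>
      have he : g ^ (k + 1) * h * (g ^ (k + 1))⁻¹ = g * (g ^ k * h * (g ^ k)⁻¹) * g⁻¹ := by
        group
      rw [he]; exact hle _ ih
  set ψ : G → G := fun u => u * (g⁻¹ * h * g) * u⁻¹ with hψ
  have hψc : Continuous ψ := by fun_prop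
  have himg : ψ '' Set.range (fun n : ℕ => g ^ (n + 1)) ⊆ (H : Set G) := by
    rintro - ⟨-, ⟨k, rfl⟩, rfl⟩
    have he : ψ (g ^ (k + 1)) = g ^ k * h * (g ^ k)⁻¹ := by simp only [hψ]; group
    rw [he]; exact hpow k
  have h1 : ψ 1 ∈ closure (ψ '' Set.range (fun n : ℕ => g ^ (n + 1))) :=
    image_closure_subset_closure_image hψc ⟨1, one_mem_closure_pow g, rfl⟩
  have h2 : ψ 1 ∈ (H : Set G) := by
    have := closure_mono himg h1
    rwa [hH.closure_eq] at this
  simpa [hψ] using h2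


/-- A family of closed subgroups of a topological group `G`: a set of closed subgroups
that is closed under conjugation and under passing to closed subgroups. -/
def IsFamilyOfClosedSubgroups (G : Type*) [Group G] [TopologicalSpace G]
    (F : Set (Subgroup G)) : Prop :=
  (∀ K ∈ F, IsClosed (K : Set G)) ∧
  (∀ K ∈ F, ∀ g : G, Subgroup.map (MulAut.conj g).toMonoidHom K ∈ F) ∧
  (∀ K ∈ F, ∀ L : Subgroup G, L ≤ K → IsClosed (L : Set G) → L ∈ F)

/-- The conjugacy class `(H) = {gHg⁻¹ : g ∈ G}` of a subgroup `H` of `G`. -/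
def subgroupConjClass {G : Type*} [Group G] (H : Subgroup G) : Set (Subgroup G) :=
  {K | ∃ g : G, K = Subgroup.map (MulAut.conj g).toMonoidHom H}

/-- Let `G` be a compact Lie group, `F'` a family of closed subgroups of `G`, and `H` a
closed subgroup no conjugate of which lies in `F'`, such that `F = F' ∪ (H)` is again a
family of closed subgroups.  Let `G` act on a set `X` so that every stabilizer is a closed
subgroup belonging to `F`.  If `x` and `y` are `H`-fixed points of `X` and `g • x = y`,
then `g` lies in the normalizer of `H` in `G`. -/
theorem mem_normalizer_of_smul_fixed_point
    {𝔼 : Type*} [NormedAddCommGroup 𝔼] [NormedSpace ℝ 𝔼]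
    {M : Type*} [TopologicalSpace M] (I : ModelWithCorners ℝ 𝔼 M)
    {G : Type*} [Group G] [TopologicalSpace G] [ChartedSpace M G]
    [IsTopologicalGroup G] [CompactSpace G] [LieGroup I (⊤ : ℕ∞) G]
    (F' : Set (Subgroup G)) (hF' : IsFamilyOfClosedSubgroups G F')
    (H : Subgroup G) (hH : IsClosed (H : Set G))
    (hHF' : ∀ K ∈ subgroupConjClass H, K ∉ F')
    (hF : IsFamilyOfClosedSubgroups G (F' ∪ subgroupConjClass H))
    {X : Type*} [MulAction G X]
    (hstab : ∀ x : X, IsClosed ((MulAction.stabilizer G x : Subgroup G) : Set G) ∧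
      MulAction.stabilizer G x ∈ F' ∪ subgroupConjClass H)
    (x y : X) (hx : ∀ h ∈ H, h • x = x) (hy : ∀ h ∈ H, h • y = y)
    (g : G) (hg : g • x = y) :
    g ∈ Subgroup.normalizer (H : Set G) := by
  have hconj_one : H ∈ subgroupConjClass H :=
    ⟨1, by ext z; simp [Subgroup.mem_map]⟩
  obtain ⟨-, -, hF'sub⟩ := hF'
  have key : ∀ z : X, (∀ h ∈ H, h • z = z) → MulAction.stabilizer G z = H := by
    intro z hz
    have hHle : H ≤ MulAction.stabilizer G z := fun h hh => hz h hh
    rcases (hstab z).2 with hmem | ⟨a, ha⟩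
    · exact absurd (hF'sub _ hmem H hHle hH) (hHF' H hconj_one)
    · have hle' : ∀ h ∈ H, a⁻¹ * h * (a⁻¹)⁻¹ ∈ H := by
        intro h hh
        have hm : h ∈ Subgroup.map (MulAut.conj a).toMonoidHom H := ha ▸ hHle hh
        obtain ⟨k, hk, hk2⟩ := hm
        have : k = a⁻¹ * h * a := by
          simp only [MulEquiv.coe_toMonoidHom, MulAut.conj_apply] at hk2
          rw [← hk2]; group
        rw [inv_inv, ← this]; exact hk
      have hmap_le : Subgroup.map (MulAut.conj a).toMonoidHom H ≤ H := by
        rintro - ⟨k, hk, rfl⟩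
        have := conj_inv_mem_of_conj_mem hH hle' hk
        simpa using this
      exact le_antisymm (ha ▸ hmap_le) hHle
  have ex : MulAction.stabilizer G y
      = Subgroup.map (MulAut.conj g).toMonoidHom (MulAction.stabilizer G x) := by
    rw [← hg]; exact MulAction.stabilizer_smul_eq_stabilizer_map_conj g x
  rw [key x hx, key y hy] at ex
  rw [Subgroup.mem_normalizer_iff]
  intro n
  constructor
  · intro hn
    have : (MulAut.conj g).toMonoidHom n ∈ Subgroup.map (MulAut.conj g).toMonoidHom H :=
      ⟨n, hn, rfl⟩
    rw [← ex] at this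
    simpa using this
  · intro hn
    have : g * n * g⁻¹ ∈ Subgroup.map (MulAut.conj g).toMonoidHom H := ex ▸ hn
    obtain ⟨k, hk, hk2⟩ := this
    simp only [MulEquiv.coe_toMonoidHom, MulAut.conj_apply] at hk2
    have : k = n := by
      have := mul_right_cancel hk2
      exact mul_left_cancel this
    rwa [← this]
end

section
/- Let X be a topological space, let A and B be closed subsets of X with X = A ∪ B, and let p : E → X be a continuous map. Then the map s ↦ (s|_A, s|_B) is a homeomorphism from Γ(X) onto the subspace of Γ(A) × Γ(B) consisting of pairs (u, v) with u|_{A∩B} = v|_{A∩B}. Equivalently, the commuting square formed by the four restriction maps Γ(X) → Γ(A), Γ(X) → Γ(B), Γ(A) → Γ(A∩B), Γ(B) → Γ(A∩B) is a pullback square of topological spaces. -/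
open Set

/-- The space of continuous sections of `p : E → X` over a subset `S ⊆ X`,
topologized as a subspace of `C(S, E)` with the compact-open topology. -/
def SectionsOver {X E : Type*} [TopologicalSpace X] [TopologicalSpace E]
    (p : E → X) (S : Set X) : Type _ :=
  {s : C(S, E) // ∀ x : S, p (s x) = (x : X)}

instance {X E : Type*} [TopologicalSpace X] [TopologicalSpace E]
    (p : E → X) (S : Set X) : TopologicalSpace (SectionsOver p S) :=
  inferInstanceAs (TopologicalSpace {s : C(S, E) // ∀ x : S, p (s x) = (x : X)})

/-- The restriction map on section spaces, for `T ⊆ S`. -/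
def SectionsOver.restrict {X E : Type*} [TopologicalSpace X] [TopologicalSpace E]
    (p : E → X) {S T : Set X} (hTS : T ⊆ S) (s : SectionsOver p S) :
    SectionsOver p T :=
  ⟨s.1.comp ⟨Set.inclusion hTS, continuous_inclusion hTS⟩,
    fun x => s.2 (Set.inclusion hTS x)⟩

section Glue

variable {X E : Type*} [TopologicalSpace X] [TopologicalSpace E]
    (p : E → X) {A B : Set X}

/-- Pointwise consequence of the compatibility condition. -/
theorem SectionsOver.compat_apply {u : SectionsOver p A} {v : SectionsOver p B}
    (huv : SectionsOver.restrict p inter_subset_left u =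
      SectionsOver.restrict p inter_subset_right v)
    (x : X) (hxA : x ∈ A) (hxB : x ∈ B) :
    u.1 ⟨x, hxA⟩ = v.1 ⟨x, hxB⟩ := by
  have := congrArg (fun s : SectionsOver p (A ∩ B) => s.1 ⟨x, hxA, hxB⟩) huv
  simpa [SectionsOver.restrict, Set.inclusion] using this

open Classical in
/-- The glued function underlying the glued section. -/
noncomputable def glueFun (hAB : A ∪ B = univ) (u : SectionsOver p A) (v : SectionsOver p B)
    (x : (univ : Set X)) : E :=
  if h : (x : X) ∈ A then u.1 ⟨x, h⟩
  else v.1 ⟨x, ((hAB.symm ▸ mem_univ (x : X) : (x : X) ∈ A ∪ B)).resolve_left h⟩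

theorem continuous_glueFun (hA : IsClosed A) (hB : IsClosed B) (hAB : A ∪ B = univ)
    (u : SectionsOver p A) (v : SectionsOver p B)
    (huv : SectionsOver.restrict p inter_subset_left u =
      SectionsOver.restrict p inter_subset_right v) :
    Continuous (glueFun p hAB u v) := by
  set A' : Set (univ : Set X) := Subtype.val ⁻¹' A with hA'
  set B' : Set (univ : Set X) := Subtype.val ⁻¹' B with hB'
  have hcA : ContinuousOn (glueFun p hAB u v) A' := by
    rw [continuousOn_iff_continuous_restrict]
    have : A'.domRestrict (glueFun p hAB u v) =
        (u.1 : _ → E) ∘ (fun y : A' => (⟨(y.1 : X), y.2⟩ : A)) := by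
      funext y
      exact dif_pos y.2
    rw [this]
    exact u.1.continuous.comp
      (Continuous.subtype_mk (continuous_subtype_val.comp continuous_subtype_val) _)
  have hcB : ContinuousOn (glueFun p hAB u v) B' := by
    rw [continuousOn_iff_continuous_restrict]
    have : B'.domRestrict (glueFun p hAB u v) =
        (v.1 : _ → E) ∘ (fun y : B' => (⟨(y.1 : X), y.2⟩ : B)) := by
      funext y
      by_cases h : (y.1 : X) ∈ A
      · show glueFun p hAB u v y.1 = _
        rw [glueFun, dif_pos h]
        exact SectionsOver.compat_apply p huv _ h y.2
      · show glueFun p hAB u v y.1 = _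
        rw [glueFun, dif_neg h]
        rfl
    rw [this]
    exact v.1.continuous.comp
      (Continuous.subtype_mk (continuous_subtype_val.comp continuous_subtype_val) _)
  have hlf : LocallyFinite (fun b : Bool => cond b A' B') := locallyFinite_of_finite _
  refine hlf.continuous ?_ ?_ ?_
  · apply eq_univ_of_forall
    intro x
    rcases (hAB.symm ▸ mem_univ (x : X) : (x : X) ∈ A ∪ B) with h | h
    · exact mem_iUnion.2 ⟨true, h⟩
    · exact mem_iUnion.2 ⟨false, h⟩
  · rintro (_ | _)
    · exact hB.preimage continuous_subtype_val
    · exact hA.preimage continuous_subtype_val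
  · rintro (_ | _)
    · exact hcB
    · exact hcA

/-- The glued section. -/
noncomputable def glueSection (hA : IsClosed A) (hB : IsClosed B) (hAB : A ∪ B = univ)
    (uv : {uv : SectionsOver p A × SectionsOver p B //
      SectionsOver.restrict p inter_subset_left uv.1 =
        SectionsOver.restrict p inter_subset_right uv.2}) :
    SectionsOver p univ :=
  ⟨⟨glueFun p hAB uv.1.1 uv.1.2, continuous_glueFun p hA hB hAB uv.1.1 uv.1.2 uv.2⟩,
    fun x => by
      show p (glueFun p hAB uv.1.1 uv.1.2 x) = (x : X)
      rw [glueFun]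
      split
      · exact uv.1.1.2 _
      · exact uv.1.2.2 _⟩

end Glue

/-- Let `A`, `B` be closed subsets of `X` with `X = A ∪ B` and let `p : E → X` be
continuous.  Then `s ↦ (s|_A, s|_B)` is a homeomorphism from `Γ(X)` onto the subspace of
`Γ(A) × Γ(B)` of pairs agreeing on `A ∩ B`; i.e. the square of restriction maps is a
pullback of topological spaces. -/
theorem isHomeomorph_sections_restrict_of_isClosed_union
    {X E : Type*} [TopologicalSpace X] [TopologicalSpace E]
    (p : E → X) (hp : Continuous p) {A B : Set X}
    (hA : IsClosed A) (hB : IsClosed B) (hAB : A ∪ B = univ) :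
    IsHomeomorph (fun s : SectionsOver p univ =>
      (⟨(SectionsOver.restrict p (subset_univ A) s, SectionsOver.restrict p (subset_univ B) s),
          rfl⟩ :
        {uv : SectionsOver p A × SectionsOver p B //
          SectionsOver.restrict p inter_subset_left uv.1 =
            SectionsOver.restrict p inter_subset_right uv.2})) := by
  rw [isHomeomorph_iff_exists_inverse]
  refine ⟨?_, glueSection p hA hB hAB, ?_, ?_, ?_⟩
  · -- forward map continuous
    apply Continuous.subtype_mk
    apply Continuous.prodMk <;>
    · apply Continuous.subtype_mk
      exact (ContinuousMap.continuous_precomp _).comp continuous_subtype_val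
  · -- left inverse
    intro s
    apply Subtype.ext
    apply ContinuousMap.ext
    intro x
    show glueFun p hAB _ _ x = s.1 x
    rw [glueFun]
    split
    · rfl
    · rfl
  · -- right inverse
    rintro ⟨⟨u, v⟩, huv⟩
    apply Subtype.ext
    apply Prod.ext
    · apply Subtype.ext
      apply ContinuousMap.ext
      intro a
      show glueFun p hAB u v ⟨(a : X), mem_univ _⟩ = u.1 a
      rw [glueFun, dif_pos a.2]
    · apply Subtype.ext
      apply ContinuousMap.ext
      intro b
      show glueFun p hAB u v ⟨(b : X), mem_univ _⟩ = v.1 b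
      rw [glueFun]
      split
      · exact SectionsOver.compat_apply p huv _ ‹_› b.2
      · rfl
  · -- inverse continuous
    apply continuous_induced_rng.mpr
    rw [ContinuousMap.continuous_compactOpen]
    intro K hK U hU
    -- preimages of K in A and B
    have hceA : Topology.IsClosedEmbedding (inclusion (subset_univ A)) := by
      refine ⟨Topology.IsEmbedding.inclusion _, ?_⟩
      rw [Set.range_inclusion]
      exact hA.preimage continuous_subtype_val
    have hceB : Topology.IsClosedEmbedding (inclusion (subset_univ B)) := by
      refine ⟨Topology.IsEmbedding.inclusion _, ?_⟩
      rw [Set.range_inclusion]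
      exact hB.preimage continuous_subtype_val
    have hKA : IsCompact (inclusion (subset_univ A) ⁻¹' K) := hceA.isCompact_preimage hK
    have hKB : IsCompact (inclusion (subset_univ B) ⁻¹' K) := hceB.isCompact_preimage hK
    have key : {uv : {uv : SectionsOver p A × SectionsOver p B //
          SectionsOver.restrict p inter_subset_left uv.1 =
            SectionsOver.restrict p inter_subset_right uv.2} |
          MapsTo (⇑(glueSection p hA hB hAB uv).1) K U} =
        (fun uv => (uv.1.1.1 : C(A, E))) ⁻¹'
            {f : C(A, E) | MapsTo f (inclusion (subset_univ A) ⁻¹' K) U} ∩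
          (fun uv => (uv.1.2.1 : C(B, E))) ⁻¹'
            {f : C(B, E) | MapsTo f (inclusion (subset_univ B) ⁻¹' K) U} := by
      ext ⟨⟨u, v⟩, huv⟩
      simp only [mem_setOf_eq, mem_inter_iff, mem_preimage]
      constructor
      · intro h
        constructor
        · intro a ha
          have := h ha
          rwa [show (glueSection p hA hB hAB ⟨(u, v), huv⟩).1 (inclusion (subset_univ A) a) =
              u.1 a from dif_pos a.2] at this
        · intro b hb
          have := h hb
          have heq : (glueSection p hA hB hAB ⟨(u, v), huv⟩).1 (inclusion (subset_univ B) b) =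
              v.1 b := by
            show glueFun p hAB u v _ = _
            rw [glueFun]
            split
            · exact SectionsOver.compat_apply p huv _ ‹_› b.2
            · rfl
          rwa [heq] at this
      · rintro ⟨hu, hv⟩ x hx
        show glueFun p hAB u v x ∈ U
        rw [glueFun]
        split
        · next h =>
          exact hu (show inclusion (subset_univ A) ⟨(x : X), h⟩ ∈ K from hx)
        · next h =>
          exact hv (show inclusion (subset_univ B)
            ⟨(x : X), ((hAB.symm ▸ mem_univ (x : X) : (x : X) ∈ A ∪ B)).resolve_left h⟩ ∈ K
            from hx)
    change IsOpen {uv : {uv : SectionsOver p A × SectionsOver p B //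
          SectionsOver.restrict p inter_subset_left uv.1 =
            SectionsOver.restrict p inter_subset_right uv.2} |
          MapsTo (⇑(glueSection p hA hB hAB uv).1) K U}
    rw [key]
    apply IsOpen.inter
    · exact (ContinuousMap.isOpen_setOf_mapsTo hKA hU).preimage
        (continuous_subtype_val.comp (continuous_fst.comp (continuous_subtype_val
          (p := fun uv : SectionsOver p A × SectionsOver p B =>
            SectionsOver.restrict p inter_subset_left uv.1 =
              SectionsOver.restrict p inter_subset_right uv.2))))
    · exact (ContinuousMap.isOpen_setOf_mapsTo hKB hU).preimage
        (continuous_subtype_val.comp (continuous_snd.comp (continuous_subtype_val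
          (p := fun uv : SectionsOver p A × SectionsOver p B =>
            SectionsOver.restrict p inter_subset_left uv.1 =
              SectionsOver.restrict p inter_subset_right uv.2))))
end
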